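/- arXiv:2103.10061 — 2 statements merged into one kernel-verified Lean document; each statement's English description precedes it below -/
import Mathlib

section
/- Let p be an odd prime, q a power of p (viewed as a real number), and let n ≥ 1 and k ≥ 0 be integers. Let ℛ_n^{0k} denote the finite set of weakly decreasing integer tuples λ = (λ_1, …, λ_n) with k ≥ λ_1 ≥ … ≥ λ_n ≥ 0, and for λ, μ ∈ ℛ_n^{0k} set 𝓑_λ(μ) := ∑_{1 ≤ i, j ≤ n} min(λ_i, μ_j). Then every function φ : ℛ_n^{0k} → ℝ can be written in exactly one way as a linear combination φ = ∑_{λ ∈ ℛ_n^{0k}} c_λ G_λ with real coefficients c_λ, where G_λ(μ) = (-q)^{𝓑_λ(μ)}; that is, the functions (G_λ)_{λ ∈ ℛ_n^{0k}} form a basis of the space of real-valued functions on ℛ_n^{0k}. -/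
/-
Write λ'_v = #{i | λ_i ≥ v} for the conjugate of λ. Since min(a, b) = #{1 ≤ v ≤ k | v ≤ a, v ≤ b},
𝓑_λ(μ) = ⟨λ', μ'⟩, and λ ↦ λ' is a bijection from ℛ_n^{0k} onto the antitone tuples in
{0, …, n}^k. So it suffices that the matrix (t^⟨D, E⟩) indexed by such tuples is nonsingular
whenever a ↦ t^a is injective, as it is for t = -q.

This goes by induction on n and k. If ∑_D c_D t^⟨D, E⟩ = 0 for all E, then replacing E_1 by E_1 + 1
shows that the coefficients c_D (t^{D_1} - t^n) satisfy the same relations for the bound n - 1,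
so c_D = 0 unless D_1 = n. Evaluating at E = (n, E') and dividing by t^{n²} leaves the relations
for the tuples D = (n, D') of length k - 1.
-/

/-- Weakly decreasing integer tuples λ with k ≥ λ_1 ≥ … ≥ λ_n ≥ 0
(encoded with values in `Fin (k+1)`). -/
abbrev R0k (n k : ℕ) : Type :=
  {f : Fin n → Fin (k + 1) // ∀ i j : Fin n, i ≤ j → f j ≤ f i}

/-- 𝓑_λ(μ) = ∑_{1 ≤ i, j ≤ n} min(λ_i, μ_j). -/
def Bsum {n k : ℕ} (l m : R0k n k) : ℕ :=
  ∑ i : Fin n, ∑ j : Fin n, min ((l.1 i : ℕ)) ((m.1 j : ℕ))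

open Finset Matrix

namespace AntitoneTuple

def boundedAntitone (n k : ℕ) : Finset (Fin k → ℕ) :=
  {D ∈ Fintype.piFinset fun _ => range (n + 1) | Antitone D}

variable {n k : ℕ}

lemma mem_boundedAntitone {D : Fin k → ℕ} :
    D ∈ boundedAntitone n k ↔ Antitone D ∧ ∀ i, D i ≤ n := by
  simp [boundedAntitone, and_comm]

lemma mem_boundedAntitone_succ {D : Fin (k + 1) → ℕ} :
    D ∈ boundedAntitone n (k + 1) ↔ Antitone D ∧ D 0 ≤ n := by
  rw [mem_boundedAntitone]
  exact and_congr_right fun hD => ⟨fun h => h 0, fun h i => (hD (Fin.zero_le i)).trans h⟩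

lemma boundedAntitone_subset_succ : boundedAntitone n k ⊆ boundedAntitone (n + 1) k := by
  intro D hD
  rw [mem_boundedAntitone] at hD ⊢
  exact ⟨hD.1, fun i => (hD.2 i).trans n.le_succ⟩

lemma add_single_zero_mem_boundedAntitone {E : Fin (k + 1) → ℕ}
    (hE : E ∈ boundedAntitone n (k + 1)) :
    E + Pi.single 0 1 ∈ boundedAntitone (n + 1) (k + 1) := by
  rw [mem_boundedAntitone_succ] at hE ⊢
  refine ⟨fun i j hij => ?_, by simpa using hE.2⟩
  rcases eq_or_ne j 0 with rfl | hj
  · rw [Fin.le_zero_iff.mp hij]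
  · simpa [Pi.single_apply, hj] using (hE.1 hij).trans (Nat.le_add_right _ _)

lemma vecCons_mem_boundedAntitone_iff {a : ℕ} {E : Fin k → ℕ} :
    vecCons a E ∈ boundedAntitone a (k + 1) ↔ E ∈ boundedAntitone a k := by
  rw [mem_boundedAntitone_succ, mem_boundedAntitone]
  constructor
  · rintro ⟨hE, -⟩
    refine ⟨fun i j hij => hE (Fin.succ_le_succ_iff.mpr hij), fun i => ?_⟩
    simpa using hE (Fin.zero_le i.succ)
  · rintro ⟨hE, ha⟩
    refine ⟨fun i j hij => ?_, le_rfl⟩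
    cases j using Fin.cases with
    | zero => rw [Fin.le_zero_iff.mp hij]
    | succ j =>
      cases i using Fin.cases with
      | zero => simpa using ha j
      | succ i => simpa using hE (Fin.succ_le_succ_iff.mp hij)

lemma eq_zero_of_mem_boundedAntitone_zero {D : Fin k → ℕ} (hD : D ∈ boundedAntitone 0 k) :
    D = 0 :=
  funext fun i => Nat.le_zero.mp ((mem_boundedAntitone.mp hD).2 i)

lemma mem_boundedAntitone_or_eq_vecCons {D : Fin (k + 1) → ℕ}
    (hD : D ∈ boundedAntitone (n + 1) (k + 1)) :
    D ∈ boundedAntitone n (k + 1) ∨ ∃ D' ∈ boundedAntitone (n + 1) k, vecCons (n + 1) D' = D := by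
  have hD' := mem_boundedAntitone_succ.mp hD
  rcases hD'.2.lt_or_eq with h | h
  · exact .inl (mem_boundedAntitone_succ.mpr ⟨hD'.1, Nat.lt_succ_iff.mp h⟩)
  · have hcons : vecCons (n + 1) (vecTail D) = D := h ▸ cons_head_tail D
    exact .inr ⟨vecTail D, vecCons_mem_boundedAntitone_iff.mp (hcons ▸ hD), hcons⟩

variable {K : Type*} [CommRing K] {t : K}

def PowDotProductNondegenerate (t : K) (n k : ℕ) : Prop :=
  ∀ c : (Fin k → ℕ) → K,
    (∀ E ∈ boundedAntitone n k, ∑ D ∈ boundedAntitone n k, c D * t ^ (D ⬝ᵥ E) = 0) →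
    ∀ D ∈ boundedAntitone n k, c D = 0

lemma powDotProductNondegenerate_of_eq_zero (h : ∀ D ∈ boundedAntitone n k, D = 0) :
    PowDotProductNondegenerate t n k := by
  intro c H D hD
  obtain rfl := h D hD
  have hsum := H 0 hD
  rwa [sum_eq_single_of_mem 0 hD fun D' hD' hne => absurd (h D' hD') hne, dotProduct_zero,
    pow_zero, mul_one] at hsum

lemma PowDotProductNondegenerate.eq_zero_of_head_le [IsDomain K]
    (ht : Function.Injective (t ^ · : ℕ → K))
    (hnd : PowDotProductNondegenerate t n (k + 1)) {c : (Fin (k + 1) → ℕ) → K}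
    (H : ∀ E ∈ boundedAntitone (n + 1) (k + 1),
      ∑ D ∈ boundedAntitone (n + 1) (k + 1), c D * t ^ (D ⬝ᵥ E) = 0) :
    ∀ D ∈ boundedAntitone n (k + 1), c D = 0 := by
  -- shifting the first coordinate of E multiplies the D-th term by t ^ D 0
  set c' : (Fin (k + 1) → ℕ) → K := fun D => c D * (t ^ D 0 - t ^ (n + 1))
  have hc' : ∀ E ∈ boundedAntitone n (k + 1),
      ∑ D ∈ boundedAntitone n (k + 1), c' D * t ^ (D ⬝ᵥ E) = 0 := by
    intro E hE
    rw [sum_subset boundedAntitone_subset_succ]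
    · have h1 := H _ (add_single_zero_mem_boundedAntitone hE)
      have h2 := H E (boundedAntitone_subset_succ hE)
      simp only [dotProduct_add, dotProduct_single, mul_one, pow_add] at h1
      calc ∑ D ∈ boundedAntitone (n + 1) (k + 1), c' D * t ^ (D ⬝ᵥ E)
          = ∑ D ∈ boundedAntitone (n + 1) (k + 1), c D * (t ^ (D ⬝ᵥ E) * t ^ D 0)
            - t ^ (n + 1) * ∑ D ∈ boundedAntitone (n + 1) (k + 1), c D * t ^ (D ⬝ᵥ E) := by
            rw [mul_sum, ← sum_sub_distrib]
            exact sum_congr rfl fun D _ => by ring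
        _ = 0 := by rw [h1, h2, mul_zero, sub_zero]
    · intro D hD hDn
      rw [mem_boundedAntitone_succ] at hD hDn
      have hD0 : D 0 = n + 1 := by by_contra h; exact hDn ⟨hD.1, by omega⟩
      simp [c', hD0]
  intro D hD
  have hD0 : D 0 ≠ n + 1 := by have := (mem_boundedAntitone_succ.mp hD).2; omega
  exact (mul_eq_zero.mp (hnd c' hc' D hD)).resolve_right
    (sub_ne_zero.mpr fun h => hD0 (ht h))

lemma PowDotProductNondegenerate.eq_zero_of_head_eq [IsDomain K]
    (ht : Function.Injective (t ^ · : ℕ → K))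
    (hnd : PowDotProductNondegenerate t (n + 1) k) {c : (Fin (k + 1) → ℕ) → K}
    (H : ∀ E ∈ boundedAntitone (n + 1) (k + 1),
      ∑ D ∈ boundedAntitone (n + 1) (k + 1), c D * t ^ (D ⬝ᵥ E) = 0)
    (hlow : ∀ D ∈ boundedAntitone n (k + 1), c D = 0) :
    ∀ D ∈ boundedAntitone (n + 1) k, c (vecCons (n + 1) D) = 0 := by
  have ht0 : t ≠ 0 := by
    rintro rfl
    exact absurd (ht (by simp : (0 : K) ^ 1 = 0 ^ 2)) (by norm_num)
  let cons : (Fin k → ℕ) ↪ (Fin (k + 1) → ℕ) :=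
    ⟨vecCons (n + 1), fun _ _ h => (vecCons_inj.mp h).2⟩
  refine hnd _ fun E hE => ?_
  have hsum := H (vecCons (n + 1) E) (vecCons_mem_boundedAntitone_iff.mpr hE)
  rw [← sum_subset (s₁ := (boundedAntitone (n + 1) k).map cons), sum_map] at hsum
  · have : t ^ ((n + 1) * (n + 1)) *
        ∑ D ∈ boundedAntitone (n + 1) k, c (vecCons (n + 1) D) * t ^ (D ⬝ᵥ E) = 0 := by
      rw [← hsum, mul_sum]
      refine sum_congr rfl fun D _ => ?_
      change _ = c (vecCons (n + 1) D) * t ^ (vecCons (n + 1) D ⬝ᵥ vecCons (n + 1) E)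
      rw [cons_dotProduct_cons, pow_add]
      ring
    exact (mul_eq_zero.mp this).resolve_left (pow_ne_zero _ ht0)
  · simp only [subset_iff, mem_map]
    rintro _ ⟨D, hD, rfl⟩
    exact vecCons_mem_boundedAntitone_iff.mpr hD
  · intro D hD hDcons
    rcases mem_boundedAntitone_or_eq_vecCons hD with hD | ⟨D', hD', rfl⟩
    · rw [hlow D hD, zero_mul]
    · exact absurd (mem_map_of_mem cons hD') hDcons

theorem powDotProductNondegenerate [IsDomain K] (ht : Function.Injective (t ^ · : ℕ → K)) :
    ∀ n k, PowDotProductNondegenerate t n k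
  | 0, _ => powDotProductNondegenerate_of_eq_zero fun _ => eq_zero_of_mem_boundedAntitone_zero
  | _, 0 => powDotProductNondegenerate_of_eq_zero fun _ _ => Subsingleton.elim _ _
  | n + 1, k + 1 => fun _ H D hD => by
    have hlow := (powDotProductNondegenerate ht n (k + 1)).eq_zero_of_head_le ht H
    have hhigh := (powDotProductNondegenerate ht (n + 1) k).eq_zero_of_head_eq ht H hlow
    rcases mem_boundedAntitone_or_eq_vecCons hD with hD | ⟨D', hD', rfl⟩
    exacts [hlow D hD, hhigh D' hD']

variable {m l : ℕ}

-- With 0-based `v`, entry `v` counts the parts exceeding `v`: it is λ'_{v+1}.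
def conjugate (l : ℕ) (f : Fin m → ℕ) : Fin l → ℕ := fun v => #{i | (v : ℕ) < f i}

lemma conjugate_antitone (f : Fin m → ℕ) : Antitone (conjugate l f) := fun v w hvw =>
  card_le_card fun i hi => by
    simp only [mem_filter, mem_univ, true_and] at hi ⊢
    exact lt_of_le_of_lt (Fin.le_def.mp hvw) hi

lemma conjugate_le (f : Fin m → ℕ) (v : Fin l) : conjugate l f v ≤ m :=
  (card_le_univ _).trans (Fintype.card_fin m).le

lemma lt_card_filter_lt_iff {f : Fin m → ℕ} (hf : Antitone f) (i : Fin m) (x : ℕ) :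
    (i : ℕ) < #{j | x < f j} ↔ x < f i := by
  constructor
  · intro hi
    by_contra hfi
    have hsub : ({j | x < f j} : Finset (Fin m)) ⊆ Iio i := fun j hj => by
      simp only [mem_filter, mem_univ, true_and] at hj
      exact mem_Iio.mpr (lt_of_not_ge fun hij => hfi (hj.trans_le (hf hij)))
    have := card_le_card hsub
    rw [Fin.card_Iio] at this
    omega
  · intro hfi
    have hsub : Iic i ⊆ ({j | x < f j} : Finset (Fin m)) := fun j hj =>
      mem_filter.mpr ⟨mem_univ j, hfi.trans_le (hf (mem_Iic.mp hj))⟩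
    have := card_le_card hsub
    rw [Fin.card_Iic] at this
    omega

lemma conjugate_conjugate {f : Fin m → ℕ} (hf : Antitone f) (hl : ∀ i, f i ≤ l) :
    conjugate m (conjugate l f) = f := by
  funext i
  unfold conjugate
  rw [filter_congr fun (v : Fin l) _ => lt_card_filter_lt_iff hf i v, Fin.card_filter_val_lt,
    min_eq_right (hl i)]

lemma sum_min_eq_conjugate_dotProduct {f g : Fin m → ℕ} (hf : ∀ i, f i ≤ l) :
    ∑ i, ∑ j, min (f i) (g j) = conjugate l f ⬝ᵥ conjugate l g := by
  have hmin : ∀ i j, min (f i) (g j) =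
      ∑ v : Fin l, (if (v : ℕ) < f i then 1 else 0) * (if (v : ℕ) < g j then 1 else 0) := by
    intro i j
    simp only [ite_zero_mul_ite_zero, mul_one, ← lt_min_iff]
    rw [← card_filter (fun v : Fin l => (v : ℕ) < min (f i) (g j)) univ, Fin.card_filter_val_lt,
      min_eq_right (min_le_of_left_le (hf i))]
  simp only [hmin, dotProduct, conjugate, card_filter, sum_mul_sum]
  exact (sum_congr rfl fun i _ => sum_comm).trans sum_comm

end AntitoneTuple

namespace R0k

open AntitoneTuple

variable {n k : ℕ}

def conjugate (l : R0k n k) : Fin k → ℕ := AntitoneTuple.conjugate k fun i => (l.1 i : ℕ)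

lemma antitone_val (l : R0k n k) : Antitone fun i => (l.1 i : ℕ) := fun i j hij => l.2 i j hij

lemma conjugate_mem (l : R0k n k) : conjugate l ∈ boundedAntitone n k :=
  mem_boundedAntitone.mpr ⟨conjugate_antitone _, conjugate_le _⟩

lemma conjugate_injective : Function.Injective (conjugate : R0k n k → Fin k → ℕ) := by
  intro l l' h
  have h' := congrArg (AntitoneTuple.conjugate n) h
  rw [conjugate, conjugate, conjugate_conjugate (antitone_val l) fun _ => Fin.is_le _,
    conjugate_conjugate (antitone_val l') fun _ => Fin.is_le _] at h'
  exact Subtype.ext (funext fun i => Fin.ext (congrFun h' i))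

lemma exists_conjugate_eq {D : Fin k → ℕ} (hD : D ∈ boundedAntitone n k) :
    ∃ l : R0k n k, conjugate l = D := by
  obtain ⟨hanti, hle⟩ := mem_boundedAntitone.mp hD
  refine ⟨⟨fun i => ⟨AntitoneTuple.conjugate n D i, Nat.lt_succ_of_le (conjugate_le D i)⟩,
    fun i j hij => conjugate_antitone D hij⟩, ?_⟩
  exact conjugate_conjugate hanti hle

lemma Bsum_eq_conjugate_dotProduct (l m : R0k n k) :
    Bsum l m = conjugate l ⬝ᵥ conjugate m :=
  sum_min_eq_conjugate_dotProduct fun _ => Fin.is_le _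

end R0k

section

open AntitoneTuple

variable {n k : ℕ} {K : Type*}

lemma eq_zero_of_vecMul_pow_Bsum_eq_zero [CommRing K] [IsDomain K] {t : K}
    (ht : Function.Injective (t ^ · : ℕ → K)) {c : R0k n k → K}
    (hc : c ᵥ* of (fun l m : R0k n k => t ^ Bsum l m) = 0) : c = 0 := by
  set c' : (Fin k → ℕ) → K := fun D => ∑ l with R0k.conjugate l = D, c l
  have hc' : ∀ E ∈ boundedAntitone n k, ∑ D ∈ boundedAntitone n k, c' D * t ^ (D ⬝ᵥ E) = 0 := by
    intro E hE
    obtain ⟨m, rfl⟩ := R0k.exists_conjugate_eq hE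
    calc ∑ D ∈ boundedAntitone n k, c' D * t ^ (D ⬝ᵥ R0k.conjugate m)
        = ∑ D ∈ boundedAntitone n k, ∑ l with R0k.conjugate l = D,
            c l * t ^ (R0k.conjugate l ⬝ᵥ R0k.conjugate m) :=
          sum_congr rfl fun D _ => by
            simp only [c', sum_mul]
            exact sum_congr rfl fun l hl => by rw [(mem_filter.mp hl).2]
      _ = (c ᵥ* of fun l m : R0k n k => t ^ Bsum l m) m := by
          rw [sum_fiberwise_of_maps_to fun l _ => R0k.conjugate_mem l]
          simp only [vecMul, dotProduct, of_apply, R0k.Bsum_eq_conjugate_dotProduct]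
      _ = 0 := by rw [hc, Pi.zero_apply]
  have hfiber : ∀ l, c' (R0k.conjugate l) = c l := fun l => by
    simp only [c', R0k.conjugate_injective.eq_iff, filter_eq', mem_univ, if_true, sum_singleton]
  funext l
  rw [← hfiber, Pi.zero_apply]
  exact powDotProductNondegenerate ht n k c' hc' _ (R0k.conjugate_mem l)

theorem vecMul_pow_Bsum_bijective [Field K] {t : K} (ht : Function.Injective (t ^ · : ℕ → K)) :
    Function.Bijective (of fun l m : R0k n k => t ^ Bsum l m).vecMul := by
  have hinj : Function.Injective (of fun l m : R0k n k => t ^ Bsum l m).vecMul := fun c c' h =>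
    sub_eq_zero.mp <| eq_zero_of_vecMul_pow_Bsum_eq_zero ht <| by
      rw [sub_vecMul]
      exact sub_eq_zero.mpr h
  exact ⟨hinj, vecMul_surjective_iff_isUnit.mpr (vecMul_injective_iff_isUnit.mp hinj)⟩

end

lemma pow_injective_of_one_lt_abs {R : Type*} [Ring R] [LinearOrder R] [IsStrictOrderedRing R]
    {t : R} (ht : 1 < |t|) : Function.Injective (t ^ · : ℕ → R) := fun a b h =>
  pow_right_injective₀ (one_pos.trans ht) ht.ne' (by simpa [abs_pow] using congrArg abs h)

theorem stmt3_general (p : ℕ) (hp : Nat.Prime p) (r : ℕ) (hr : 1 ≤ r)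
    (q : ℝ) (hq : q = (p : ℝ) ^ r) (n k : ℕ) :
    ∀ φ : R0k n k → ℝ, ∃! c : R0k n k → ℝ,
      φ = fun m : R0k n k => ∑ l : R0k n k, c l * (-q) ^ Bsum l m := by
  have hq1 : 1 < |-q| := by
    rw [abs_neg, hq, abs_of_pos (pow_pos (by exact_mod_cast hp.pos) r)]
    exact one_lt_pow₀ (by exact_mod_cast hp.one_lt) (by omega)
  intro φ
  obtain ⟨c, hc, huniq⟩ :=
    (vecMul_pow_Bsum_bijective (pow_injective_of_one_lt_abs hq1)).existsUnique φ
  exact ⟨c, hc.symm, fun c' hc' => huniq c' hc'.symm⟩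

theorem stmt3 (p : ℕ) (hp : Nat.Prime p) (hodd : Odd p) (r : ℕ) (hr : 1 ≤ r)
    (q : ℝ) (hq : q = (p : ℝ) ^ r) (n k : ℕ) (hn : 1 ≤ n) :
    ∀ φ : R0k n k → ℝ, ∃! c : R0k n k → ℝ,
      φ = fun m : R0k n k => ∑ l : R0k n k, c l * (-q) ^ Bsum l m :=
  stmt3_general p hp r hr q hq n k
end

section
/- Let q > 1 be a real number and n ≥ 1 an integer. For 0 ≤ l ≤ 2n, let 𝔐_l be the (l+1)×(l+1) real matrix with (i, s)-entry (-q)^{s(2n-i)} (0 ≤ i, s ≤ l), let d_{i,l} (0 ≤ i ≤ l) be the components of the unique solution of 𝔐_l d = (0, …, 0, 1)^T, let Δ be the (2n+1)×(2n+1) upper triangular matrix with Δ_{i,l} = d_{i,l} for i ≤ l, let v ∈ ℝ^{2n+1} have v_0 = 0 and v_k = (-q)^{n(2n-k) - 4n²} - (-q)^{-2n²} for 1 ≤ k ≤ 2n, and let K = (K_0, …, K_{2n}) be the unique solution of (𝔐_{2n}·Δ)·K = v. Then for every 0 ≤ l ≤ n-1, d_{n-l,n-l}·K_{n-l} = (-q)^{-4n²}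 · ∏_{j=1}^{l} [ (-q)^{n+j} · ((-q)^n - (-q)^{j-1}) / ((-q)^j - 1) ] (the empty product for l = 0 being 1). In particular K_i ≠ 0 for every 1 ≤ i ≤ n. -/
/-
The columns of `Δ` are the coefficient vectors of polynomials of degree `≤ l` vanishing at the
nodes `ν_0, …, ν_{l-1}`, where `ν_i = (-q)^(2n-i)`; hence they are `d_{l,l} ∏_{m<l} (X - ν_m)`,
and `𝔐_{2n} Δ` is the lower triangular Newton matrix times `diag(d_{l,l})`. So the numbers
`d_{l,l} K_l` are the Newton coefficients of the interpolant of `v`, which is the degree `n`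
polynomial `(-q)^{-4n²} w^n - (-q)^{-2n²}`. At the geometric nodes `ν_i = a r^i`
(`a = (-q)^{2n}`, `r = (-q)⁻¹`) the Newton coefficients of `w^n` are `a^{n-m}` times the Gaussian
binomials `[n, m]_r` (the `q`-binomial theorem). The ratio `[n, m+1]_r / [n, m]_r` produces the
factors of the product one at a time, and since `r` is not a root of unity no `[n, m]_r` vanishes.
-/

/-- The (l+1)×(l+1) matrix 𝔐_l with (i,s)-entry (-q)^{s(2n-i)}. -/
noncomputable def Mmat (q : ℝ) (n l : ℕ) : Matrix (Fin (l + 1)) (Fin (l + 1)) ℝ :=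
  Matrix.of fun i s => (-q) ^ ((s : ℕ) * (2 * n - (i : ℕ)))

open Finset Polynomial Matrix

section GaussianBinomial

variable {R : Type*} [CommRing R]

/-- The Gaussian binomial `[n, k]_r`, defined by the `q`-Pascal rule so that no division occurs. -/
def qBinom (r : R) : ℕ → ℕ → R
  | _, 0 => 1
  | 0, _ + 1 => 0
  | n + 1, k + 1 => qBinom r n k + r ^ (k + 1) * qBinom r n (k + 1)

@[simp] theorem qBinom_zero_right (r : R) (n : ℕ) : qBinom r n 0 = 1 := by cases n <;> rfl

theorem qBinom_succ_succ (r : R) (n k : ℕ) :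
    qBinom r (n + 1) (k + 1) = qBinom r n k + r ^ (k + 1) * qBinom r n (k + 1) := rfl

theorem qBinom_eq_zero_of_lt (r : R) : ∀ {n k : ℕ}, n < k → qBinom r n k = 0
  | 0, _ + 1, _ => rfl
  | n + 1, k + 1, h => by
    rw [qBinom_succ_succ, qBinom_eq_zero_of_lt r (by omega), qBinom_eq_zero_of_lt r (by omega)]
    ring

theorem qBinom_self (r : R) (n : ℕ) : qBinom r n n = 1 := by
  induction n with
  | zero => rfl
  | succ n ih =>
    rw [qBinom_succ_succ, ih, qBinom_eq_zero_of_lt r n.lt_succ_self, mul_zero, add_zero]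

/-- The `q`-analogue of `Nat.choose_succ_right_eq`. -/
theorem qBinom_succ_right_eq (r : R) (n k : ℕ) :
    qBinom r n (k + 1) * (r ^ (k + 1) - 1) = qBinom r n k * (r ^ (n - k) - 1) := by
  induction n generalizing k with
  | zero => cases k <;> simp [qBinom]
  | succ n ih =>
    rcases k with _ | k
    · have h := ih 0
      simp only [qBinom_succ_succ, qBinom_zero_right, zero_add, pow_one, Nat.sub_zero] at h ⊢
      linear_combination r * h
    · rw [qBinom_succ_succ, qBinom_succ_succ, Nat.add_sub_add_right]
      rcases lt_or_ge k n with hk | hk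
      · have e₁ : r ^ (k + 2) * r ^ (n - (k + 1)) = r ^ (n + 1) := by
          rw [← pow_add]; congr 1; omega
        have e₂ : r ^ (k + 1) * r ^ (n - k) = r ^ (n + 1) := by
          rw [← pow_add]; congr 1; omega
        linear_combination r ^ (k + 2) * ih (k + 1) + ih k + qBinom r n (k + 1) * (e₁ - e₂)
      · rw [qBinom_eq_zero_of_lt r (by omega : n < k + 1),
          qBinom_eq_zero_of_lt r (by omega : n < k + 1 + 1), Nat.sub_eq_zero_of_le hk]
        ring

theorem qBinom_ne_zero [IsDomain R] {r : R} {n : ℕ} (hr : ∀ k ∈ Icc 1 n, r ^ k ≠ 1) :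
    ∀ {k : ℕ}, k ≤ n → qBinom r n k ≠ 0
  | 0, _ => by simp
  | k + 1, hk => by
    have hrhs : qBinom r n k * (r ^ (n - k) - 1) ≠ 0 :=
      mul_ne_zero (qBinom_ne_zero hr (by omega))
        (sub_ne_zero.2 (hr _ (mem_Icc.2 ⟨by omega, by omega⟩)))
    exact left_ne_zero_of_mul (qBinom_succ_right_eq r n k ▸ hrhs)

theorem pow_eq_sum_qBinom_mul_prod (r z : R) (n : ℕ) :
    z ^ n = ∑ m ∈ range (n + 1), qBinom r n m * ∏ j ∈ range m, (z - r ^ j) := by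
  induction n with
  | zero => simp
  | succ n ih =>
    have hz : ∀ m, z * ∏ j ∈ range m, (z - r ^ j) =
        ∏ j ∈ range (m + 1), (z - r ^ j) + r ^ m * ∏ j ∈ range m, (z - r ^ j) := by
      intro m; rw [prod_range_succ]; ring
    have hshift : ∑ m ∈ range (n + 1), qBinom r n m * (r ^ m * ∏ j ∈ range m, (z - r ^ j)) =
        ∑ m ∈ range (n + 1), r ^ (m + 1) * qBinom r n (m + 1) * ∏ j ∈ range (m + 1), (z - r ^ j) +
          1 := by
      rw [← add_zero (∑ m ∈ range (n + 1), _), ← mul_eq_zero_of_left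
        (qBinom_eq_zero_of_lt r n.lt_succ_self) (r ^ (n + 1) * ∏ j ∈ range (n + 1), (z - r ^ j)),
        ← sum_range_succ, sum_range_succ']
      simp only [qBinom_zero_right, pow_zero, prod_range_zero, mul_one]
      exact congrArg (· + 1) (sum_congr rfl fun m _ => by ring)
    rw [pow_succ', ih, mul_sum, sum_range_succ' _ (n + 1)]
    simp_rw [mul_left_comm z, hz, mul_add, sum_add_distrib, hshift, qBinom_succ_succ, add_mul,
      sum_add_distrib]
    simp only [qBinom_zero_right, range_zero, prod_empty, mul_one]
    ring

theorem mul_pow_eq_sum_qBinom_mul_prod (a r z : R) (n : ℕ) :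
    (a * z) ^ n =
      ∑ m ∈ range (n + 1), a ^ (n - m) * qBinom r n m * ∏ j ∈ range m, (a * z - a * r ^ j) := by
  rw [mul_pow, pow_eq_sum_qBinom_mul_prod r z n, mul_sum]
  refine sum_congr rfl fun m hm => ?_
  have hprod : ∏ j ∈ range m, (a * z - a * r ^ j) = a ^ m * ∏ j ∈ range m, (z - r ^ j) := by
    simp_rw [← mul_sub, prod_mul_distrib, prod_const, card_range]
  rw [hprod, ← pow_sub_mul_pow a (Nat.lt_succ_iff.1 (mem_range.1 hm))]
  ring

theorem pow_mul_qBinom_inv_eq_prod {K : Type*} [Field K] {x : K} (hx : x ≠ 0) {n : ℕ}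
    (hx₁ : ∀ k ∈ Icc 1 n, x ^ k ≠ 1) {l : ℕ} (hl : l ≤ n) :
    (x ^ (2 * n)) ^ l * qBinom x⁻¹ n (n - l) =
      ∏ j ∈ Icc 1 l,
        x ^ ((n : ℤ) + j) * ((x ^ (n : ℤ) - x ^ ((j : ℤ) - 1)) / (x ^ (j : ℤ) - 1)) := by
  induction l with
  | zero => simp [qBinom_self]
  | succ l ih =>
    have hfactor : x ^ ((n : ℤ) + (l + 1 : ℕ)) * ((x ^ (n : ℤ) - x ^ (((l + 1 : ℕ) : ℤ) - 1)) /
        (x ^ ((l + 1 : ℕ) : ℤ) - 1)) = x ^ (n + l + 1) * ((x ^ n - x ^ l) / (x ^ (l + 1) - 1)) := by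
      rw [(by push_cast; ring : (n : ℤ) + (l + 1 : ℕ) = (n + l + 1 : ℕ)),
        (by push_cast; ring : ((l + 1 : ℕ) : ℤ) - 1 = l)]
      simp only [zpow_natCast]
    rw [prod_Icc_succ_top (by omega), ← ih (by omega), hfactor, pow_succ, mul_assoc, mul_assoc]
    congr 1
    obtain ⟨t, rfl⟩ : ∃ t, n = t + (l + 1) := ⟨n - (l + 1), by omega⟩
    have hratio := qBinom_succ_right_eq x⁻¹ (t + (l + 1)) t
    rw [(by omega : t + (l + 1) - t = l + 1)] at hratio
    rw [(by omega : t + (l + 1) - l = t + 1), (by omega : t + (l + 1) - (l + 1) = t)]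
    have hxl : x ^ l * x ≠ 1 := pow_succ x l ▸ hx₁ (l + 1) (mem_Icc.2 ⟨by omega, by omega⟩)
    have hxl' : x⁻¹ ^ (l + 1) - 1 ≠ 0 := by
      rw [inv_pow, sub_ne_zero, inv_ne_one, pow_succ]; exact hxl
    have key : x ^ (2 * (t + (l + 1))) * ((x⁻¹ ^ (t + 1) - 1) / (x⁻¹ ^ (l + 1) - 1)) =
        x ^ (t + (l + 1) + l + 1) * ((x ^ (t + (l + 1)) - x ^ l) / (x ^ (l + 1) - 1)) := by
      -- a rational identity in `x ^ (t + 1)`, `x ^ l` and `x`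
      have e₁ : x ^ (2 * (t + (l + 1))) = (x ^ (t + 1)) ^ 2 * (x ^ l) ^ 2 := by ring
      have e₂ : x ^ (t + (l + 1) + l + 1) = x ^ (t + 1) * (x ^ l) ^ 2 * x := by ring
      have e₃ : x ^ (t + (l + 1)) = x ^ (t + 1) * x ^ l := by ring
      rw [e₁, e₂, e₃, inv_pow, inv_pow, pow_succ x l]
      have hux : x ^ l * x - 1 ≠ 0 := sub_ne_zero.2 hxl
      field_simp
      ring
    rw [eq_div_of_mul_eq hxl' hratio.symm, ← key]
    ring

end GaussianBinomial

theorem Polynomial.eq_C_coeff_mul_prod_X_sub_C {K : Type*} [Field K] {p : K[X]} {l : ℕ}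
    {ν : ℕ → K} (hν : Set.InjOn ν (range l)) (hdeg : p.natDegree ≤ l)
    (hroot : ∀ m < l, p.IsRoot (ν m)) :
    p = C (p.coeff l) * ∏ m ∈ range l, (X - C (ν m)) := by
  set P := ∏ m ∈ range l, (X - C (ν m))
  have hmonic : P.Monic := monic_prod_of_monic _ _ fun m _ => monic_X_sub_C (ν m)
  have hPdeg : P.natDegree = l := by
    rw [natDegree_prod_of_monic _ _ fun m _ => monic_X_sub_C (ν m)]
    simp
  have hdvd : P ∣ p := by
    refine Finset.prod_dvd_of_coprime (fun a ha b hb hab => ?_) fun m hm =>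
      dvd_iff_isRoot.2 (hroot m (mem_range.1 hm))
    exact isCoprime_X_sub_C_of_isUnit_sub (sub_ne_zero.2 fun h => hab (hν ha hb h)).isUnit
  have h := eq_leadingCoeff_mul_of_monic_of_dvd_of_natDegree_le hmonic hdvd (hPdeg ▸ hdeg)
  have hcoeff : p.coeff l = p.leadingCoeff := by
    rw [congrArg (coeff · l) h, coeff_C_mul, ← hPdeg, hmonic.coeff_natDegree, mul_one]
  rwa [hcoeff]

theorem Polynomial.eval_ofFn {R : Type*} [CommSemiring R] [DecidableEq R] {n : ℕ}
    (v : Fin n → R) (x : R) : (ofFn n v).eval x = ∑ i, v i * x ^ (i : ℕ) := by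
  simp [ofFn_eq_sum_monomial, eval_finsetSum]

namespace Matrix

theorem vandermonde_mulVec_apply {R : Type*} [CommRing R] [DecidableEq R] {n : ℕ}
    (ν c : Fin n → R) (i : Fin n) : (vandermonde ν *ᵥ c) i = (ofFn n c).eval (ν i) := by
  simp [mulVec, dotProduct, eval_ofFn, mul_comm]

section Newton

variable {R : Type*} [CommRing R]

/-- Column `l` lists the values at the nodes of the Newton basis polynomial `∏_{m<l} (X - ν m)`. -/
def newton (ν : ℕ → R) (n : ℕ) : Matrix (Fin n) (Fin n) R :=
  of fun i l => ∏ m ∈ range l, (ν i - ν m)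

@[simp] theorem newton_apply (ν : ℕ → R) (n : ℕ) (i l : Fin n) :
    newton ν n i l = ∏ m ∈ range l, (ν i - ν m) := rfl

theorem newton_isLowerTriangular (ν : ℕ → R) (n : ℕ) : (newton ν n).IsLowerTriangular :=
  fun _ _ h => prod_eq_zero (mem_range.2 h) (sub_self _)

theorem newton_mulVec_single_zero (ν : ℕ → R) (n : ℕ) :
    newton ν (n + 1) *ᵥ Pi.single 0 1 = 1 := by
  ext i; simp

theorem newton_mulVec_injective {K : Type*} [Field K] {ν : ℕ → K} {n : ℕ}
    (hν : Set.InjOn ν (range n)) : Function.Injective (newton ν n).mulVec := by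
  rw [mulVec_injective_iff_isUnit, isUnit_iff_isUnit_det,
    det_of_isLowerTriangular _ (newton_isLowerTriangular ν n), isUnit_iff_ne_zero]
  simp only [newton_apply]
  refine prod_ne_zero_iff.2 fun i _ => prod_ne_zero_iff.2 fun m hm => sub_ne_zero.2 fun h => ?_
  have hm := mem_range.1 hm
  exact hm.ne' (hν (by simp) (mem_range.2 (hm.trans i.2)) h)

theorem newton_mulVec_qBinom (a r : R) {n N : ℕ} (hn : n ≤ N) :
    newton (fun i => a * r ^ i) (N + 1) *ᵥ (fun m => a ^ (n - m) * qBinom r n m) =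
      fun i : Fin (N + 1) => (a * r ^ (i : ℕ)) ^ n := by
  ext i
  simp only [mulVec, dotProduct, newton_apply]
  rw [Fin.sum_univ_eq_sum_range (fun m => (∏ j ∈ range m, (a * r ^ (i : ℕ) - a * r ^ j)) *
      (a ^ (n - m) * qBinom r n m)), mul_pow_eq_sum_qBinom_mul_prod a r,
    ← sum_subset (range_subset_range.2 (by omega : n + 1 ≤ N + 1))]
  · exact sum_congr rfl fun m _ => by ring
  · intro m _ hm
    rw [qBinom_eq_zero_of_lt r (by simpa using hm), mul_zero, mul_zero]

theorem vandermonde_mul_eq_newton_mul_diagonal {K : Type*} [Field K] [DecidableEq K] {N : ℕ}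
    {ν : ℕ → K} (hν : Set.InjOn ν (range N)) {d : ℕ → ℕ → K}
    (hd : ∀ l ≤ N, vandermonde (fun i : Fin (l + 1) => ν i) *ᵥ (fun s => d s l) =
      Pi.single (Fin.last l) 1) :
    vandermonde (fun i : Fin (N + 1) => ν i) *
        of (fun i l : Fin (N + 1) => if (i : ℕ) ≤ l then d i l else 0) =
      newton ν (N + 1) * diagonal fun l : Fin (N + 1) => d l l := by
  set p : Fin (N + 1) → K[X] := fun l => ofFn (l + 1) fun s => d s l
  have hdeg : ∀ l, (p l).natDegree ≤ l := fun l =>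
    Nat.le_of_lt_succ (ofFn_natDegree_lt l.val.succ_pos _)
  have hcoeff : of (fun i l : Fin (N + 1) => if (i : ℕ) ≤ l then d i l else 0) =
      of fun i l : Fin (N + 1) => (p l).coeff i := by
    ext i l
    by_cases h : (i : ℕ) ≤ l
    · rw [of_apply, of_apply, if_pos h, ofFn_coeff_eq_val_of_lt _ (Nat.lt_succ_of_le h)]
    · rw [of_apply, of_apply, if_neg h, ofFn_coeff_eq_zero_of_ge _ (not_le.1 h)]
  rw [hcoeff, ← eval_matrixOfPolynomials_eq_vandermonde_mul_matrixOfPolynomials _ p hdeg]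
  ext i l
  have hroot : ∀ m < (l : ℕ), (p l).IsRoot (ν m) := fun m hm => by
    have := congrFun (hd l (Nat.lt_succ_iff.1 l.isLt)) ⟨m, by omega⟩
    rwa [vandermonde_mulVec_apply, Pi.single_apply, if_neg (Fin.ne_of_val_ne hm.ne)] at this
  have hl := Polynomial.eq_C_coeff_mul_prod_X_sub_C (hν.mono (by simpa using l.isLt)) (hdeg l)
    hroot
  have hlead : (p l).coeff l = d l l := ofFn_coeff_eq_val_of_lt _ l.val.lt_succ_self
  rw [of_apply, hl, hlead]
  simp [eval_prod, mul_comm]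

end Newton

end Matrix

section AbsNeOne

variable {K : Type*} [Field K] [LinearOrder K] [IsStrictOrderedRing K] {r : K}

theorem pow_ne_one_of_abs_ne_one (hr : |r| ≠ 1) {k : ℕ} (hk : k ≠ 0) : r ^ k ≠ 1 :=
  fun h => hr ((abs_pow_eq_one r hk).1 (by rw [h, abs_one]))

theorem mul_pow_right_injective₀ {a : K} (ha : a ≠ 0) (hr₀ : r ≠ 0) (hr : |r| ≠ 1) :
    Function.Injective fun i : ℕ => a * r ^ i :=
  fun i j h => pow_right_injective₀ (abs_pos.2 hr₀) hr
    (by simpa only [abs_pow] using congrArg abs (mul_left_cancel₀ ha h))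

end AbsNeOne

theorem eq_smul_nodes_pow_sub_smul_one {q : ℝ} (hq : q ≠ 0) {n : ℕ} {v : Fin (2 * n + 1) → ℝ}
    (hv : ∀ k : Fin (2 * n + 1), v k =
      if (k : ℕ) = 0 then 0
      else (-q) ^ ((n : ℤ) * (2 * (n : ℤ) - ((k : ℕ) : ℤ)) - 4 * (n : ℤ) ^ 2)
        - (-q) ^ (-2 * (n : ℤ) ^ 2)) :
    v = (-q) ^ (-4 * (n : ℤ) ^ 2) •
        (fun k : Fin (2 * n + 1) => ((-q) ^ (2 * n) * (-q)⁻¹ ^ (k : ℕ)) ^ n) -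
      (-q) ^ (-2 * (n : ℤ) ^ 2) • 1 := by
  have hx : -q ≠ 0 := neg_ne_zero.2 hq
  -- `v_0 = 0` fits the same formula: its two powers of `-q` coincide at `k = 0`
  have hpow : ∀ k : ℕ, (-q) ^ (-4 * (n : ℤ) ^ 2) * ((-q) ^ (2 * n) * (-q)⁻¹ ^ k) ^ n =
      (-q) ^ ((n : ℤ) * (2 * n - k) - 4 * (n : ℤ) ^ 2) := fun k => by
    rw [← zpow_natCast, ← zpow_natCast, ← zpow_natCast, _root_.inv_zpow', ← zpow_add₀ hx,
      ← _root_.zpow_mul, ← zpow_add₀ hx]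
    push_cast; ring_nf
  ext k
  rw [hv k, Pi.sub_apply, Pi.smul_apply, Pi.smul_apply, smul_eq_mul, smul_eq_mul, Pi.one_apply,
    mul_one, hpow]
  split_ifs with hk
  · rw [hk, eq_comm, sub_eq_zero]; ring_nf
  · rfl

theorem Mmat_eq_vandermonde {q : ℝ} (hq : q ≠ 0) {n l : ℕ} (hl : l ≤ 2 * n) :
    Mmat q n l = vandermonde fun i : Fin (l + 1) => (-q) ^ (2 * n) * (-q)⁻¹ ^ (i : ℕ) := by
  ext i s
  rw [Mmat, of_apply, vandermonde_apply, inv_pow, ← pow_sub₀ _ (neg_ne_zero.2 hq) (by omega),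
    ← pow_mul']

theorem stmt10 (q : ℝ) (hq : 1 < q) (n : ℕ) (hn : 1 ≤ n)
    (d : ℕ → ℕ → ℝ)
    (hd : ∀ l, l ≤ 2 * n →
      (Mmat q n l).mulVec (fun i => d (i : ℕ) l) = Pi.single (Fin.last l) 1)
    (Δ : Matrix (Fin (2 * n + 1)) (Fin (2 * n + 1)) ℝ)
    (hΔ : ∀ i l : Fin (2 * n + 1),
      Δ i l = if (i : ℕ) ≤ (l : ℕ) then d (i : ℕ) (l : ℕ) else 0)
    (v : Fin (2 * n + 1) → ℝ)
    (hv : ∀ k : Fin (2 * n + 1), v k =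
      if (k : ℕ) = 0 then 0
      else (-q) ^ ((n : ℤ) * (2 * (n : ℤ) - ((k : ℕ) : ℤ)) - 4 * (n : ℤ) ^ 2)
        - (-q) ^ (-2 * (n : ℤ) ^ 2))
    (K : Fin (2 * n + 1) → ℝ)
    (hK : (Mmat q n (2 * n) * Δ).mulVec K = v) :
    (∀ l : ℕ, ∀ hl : l ≤ n - 1,
      d (n - l) (n - l) * K ⟨n - l, by omega⟩ =
        (-q) ^ (-4 * (n : ℤ) ^ 2) *
          ∏ j ∈ Finset.Icc 1 l,
            ((-q) ^ ((n : ℤ) + (j : ℤ)) *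
              (((-q) ^ (n : ℤ) - (-q) ^ ((j : ℤ) - 1)) / ((-q) ^ (j : ℤ) - 1)))) ∧
    (∀ i : ℕ, ∀ h1 : 1 ≤ i, ∀ h2 : i ≤ n, K ⟨i, by omega⟩ ≠ 0) := by
  have hq₀ : q ≠ 0 := by positivity
  have hx₀ : -q ≠ 0 := neg_ne_zero.2 hq₀
  have habs : |-q| ≠ 1 := by rw [abs_neg, abs_of_pos (by positivity)]; exact hq.ne'
  have habs' : |(-q)⁻¹| ≠ 1 := by rwa [abs_inv, Ne, inv_eq_one]
  have hx₁ : ∀ k ∈ Icc 1 n, (-q) ^ k ≠ 1 := fun k hk =>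
    pow_ne_one_of_abs_ne_one habs (Nat.one_le_iff_ne_zero.1 (mem_Icc.1 hk).1)
  have hr₁ : ∀ k ∈ Icc 1 n, (-q)⁻¹ ^ k ≠ 1 := fun k hk =>
    pow_ne_one_of_abs_ne_one habs' (Nat.one_le_iff_ne_zero.1 (mem_Icc.1 hk).1)
  set ν : ℕ → ℝ := fun i => (-q) ^ (2 * n) * (-q)⁻¹ ^ i
  have hν : Function.Injective ν :=
    mul_pow_right_injective₀ (pow_ne_zero _ hx₀) (inv_ne_zero hx₀) habs'
  have hsys : newton ν (2 * n + 1) *ᵥ (fun l => d l l * K l) = v := by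
    have hΔ' : Δ = of fun i l : Fin (2 * n + 1) => if (i : ℕ) ≤ l then d i l else 0 := by
      ext i l; exact hΔ i l
    rw [← hK, hΔ', Mmat_eq_vandermonde hq₀ le_rfl, vandermonde_mul_eq_newton_mul_diagonal hν.injOn
      fun l hl => by simpa only [Mmat_eq_vandermonde hq₀ hl] using hd l hl, ← mulVec_mulVec]
    congr 1; ext l; rw [mulVec_diagonal]
  set α : ℝ := (-q) ^ (-4 * (n : ℤ) ^ 2)
  have hsol : newton ν (2 * n + 1) *ᵥ (α • (fun m : Fin (2 * n + 1) =>
      ((-q) ^ (2 * n)) ^ (n - m) * qBinom (-q)⁻¹ n m) -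
        (-q) ^ (-2 * (n : ℤ) ^ 2) • Pi.single 0 1) = v := by
    rw [mulVec_sub, mulVec_smul, mulVec_smul, newton_mulVec_qBinom _ _ (by omega),
      newton_mulVec_single_zero, eq_smul_nodes_pow_sub_smul_one hq₀ hv]
  have hc : ∀ k : Fin (2 * n + 1), (k : ℕ) ≠ 0 →
      d k k * K k = α * (((-q) ^ (2 * n)) ^ (n - k) * qBinom (-q)⁻¹ n k) := fun k hk => by
    have := congrFun (newton_mulVec_injective hν.injOn (hsys.trans hsol.symm)) k
    simpa [Pi.single_apply, Fin.ext_iff, hk] using this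
  refine ⟨fun l hl => ?_, fun i h1 h2 hK0 => ?_⟩
  · rw [hc ⟨n - l, by omega⟩ (show n - l ≠ 0 by omega), Nat.sub_sub_self (by omega),
      pow_mul_qBinom_inv_eq_prod hx₀ hx₁ (by omega)]
  · have := hc ⟨i, by omega⟩ (show i ≠ 0 by omega)
    rw [hK0, mul_zero] at this
    exact mul_ne_zero (zpow_ne_zero _ hx₀) (mul_ne_zero (pow_ne_zero _ (pow_ne_zero _ hx₀))
      (qBinom_ne_zero hr₁ h2)) this.symm
end
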